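/- arXiv:1305.1415 — 2 statements merged into one kernel-verified Lean document; each statement's English description precedes it below -/
import Mathlib

section
/- A clique in the IDNC graph yields an instantly decodable transmission: let Γ_i, Ω_i ⊆ {1,…,n} with Γ_i ∩ Ω_i = ∅ for each client i, and let G be the graph whose vertices are the pairs (i,j) with j ∈ Ω_i, with distinct vertices (i,j) and (k,l) adjacent iff j = l or (j ∈ Γ_k and l ∈ Γ_i). Let K be a clique of G and let L = {j : (i,j) ∈ K for some i} be the set of packet indices occurring in K. Then for every (i,j) ∈ K one has L \ {j} ⊆ Γ_i; consequently, if the packets p_1,…,p_n lie in a vector space over F_2 and the XOR s = ∑_{l ∈ L} p_l is broadcast, every client i with (i,j) ∈ K recovers its wanted packet as p_j = s + ∑_{l ∈ L \ {j}} p_l, where all summands in the correction term lie in its Has set. -/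
/-- Adjacency in the IDNC graph: vertices are pairs `(i,j)` (client `i` wants packet
`j`), and `(i,j)`, `(k,l)` are adjacent iff `j = l`, or packet `j` is held by client
`k` and packet `l` is held by client `i`. -/
def idncAdj {n : ℕ} (Γ : Fin n → Finset (Fin n))
    (v w : Fin n × Fin n) : Prop :=
  v.2 = w.2 ∨ (v.2 ∈ Γ w.1 ∧ w.2 ∈ Γ v.1)

/-!
Two distinct vertices of a clique that want different packets can only be adjacent through
the second clause of `idncAdj`, so each client of the clique holds every other packet
occurring in it. Over `F₂` every vector is its own negative, so adding these held packets to
the XOR cancels everything but the wanted packet.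
-/

theorem idncAdj.snd_mem_of_snd_ne {n : ℕ} {Γ : Fin n → Finset (Fin n)} {v w : Fin n × Fin n}
    (h : idncAdj Γ v w) (hne : w.2 ≠ v.2) : w.2 ∈ Γ v.1 :=
  (h.resolve_left hne.symm).2

theorem idncClique_image_snd_erase_subset {n : ℕ} {Γ : Fin n → Finset (Fin n)}
    {K : Finset (Fin n × Fin n)} (hK : ∀ v ∈ K, ∀ w ∈ K, v ≠ w → idncAdj Γ v w)
    {v : Fin n × Fin n} (hv : v ∈ K) : (K.image Prod.snd).erase v.2 ⊆ Γ v.1 := by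
  intro l hl
  obtain ⟨hlv, hlK⟩ := Finset.mem_erase.mp hl
  obtain ⟨w, hw, rfl⟩ := Finset.mem_image.mp hlK
  exact (hK v hv w hw (fun hvw => hlv (hvw ▸ rfl))).snd_mem_of_snd_ne hlv

theorem ZModModule.sum_add_sum_erase {ι V : Type*} [DecidableEq ι] [AddCommGroup V]
    [Module (ZMod 2) V] (f : ι → V) {s : Finset ι} {j : ι} (hj : j ∈ s) :
    ∑ l ∈ s, f l + ∑ l ∈ s.erase j, f l = f j := by
  rw [← Finset.add_sum_erase s f hj, add_assoc, ZModModule.add_self, add_zero]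

theorem idnc_clique_instantly_decodable_general
    {n : ℕ} (Γ : Fin n → Finset (Fin n))
    (K : Finset (Fin n × Fin n))
    (hKclique : ∀ v ∈ K, ∀ w ∈ K, v ≠ w → idncAdj Γ v w)
    (L : Finset (Fin n)) (hL : L = K.image Prod.snd)
    (V : Type*) [AddCommGroup V] [Module (ZMod 2) V]
    (pk : Fin n → V) (s : V) (hs : s = ∑ l ∈ L, pk l) :
    (∀ i j, (i, j) ∈ K → ∀ l ∈ L, l ≠ j → l ∈ Γ i) ∧
    (∀ i j, (i, j) ∈ K → pk j = s + ∑ l ∈ L.erase j, pk l) := by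
  subst hL hs
  refine ⟨fun i j hij l hl hlj => ?_, fun i j hij => ?_⟩
  · exact idncClique_image_snd_erase_subset hKclique hij (Finset.mem_erase.mpr ⟨hlj, hl⟩)
  · exact (ZModModule.sum_add_sum_erase pk (Finset.mem_image_of_mem Prod.snd hij)).symm

/-- A clique in the IDNC graph yields an instantly decodable transmission: if `K` is a
clique (vertices `(i,j)` with `j ∈ Ω i`, pairwise adjacent) and
`L = {j : (i,j) ∈ K for some i}`, then for every `(i,j) ∈ K` we have
`L \ {j} ⊆ Γ i`; consequently, broadcasting the XOR `s = ∑_{l ∈ L} p_l` of packets in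
a vector space over `F₂` lets every client `i` with `(i,j) ∈ K` recover
`p_j = s + ∑_{l ∈ L \ {j}} p_l`, with all correction summands held by client `i`. -/
theorem idnc_clique_instantly_decodable
    {n : ℕ} (Γ Ω : Fin n → Finset (Fin n))
    (hdisj : ∀ i, Disjoint (Γ i) (Ω i))
    (K : Finset (Fin n × Fin n))
    (hKvert : ∀ v ∈ K, v.2 ∈ Ω v.1)
    (hKclique : ∀ v ∈ K, ∀ w ∈ K, v ≠ w → idncAdj Γ v w)
    (L : Finset (Fin n)) (hL : L = K.image Prod.snd)
    (V : Type*) [AddCommGroup V] [Module (ZMod 2) V]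
    (pk : Fin n → V) (s : V) (hs : s = ∑ l ∈ L, pk l) :
    (∀ i j, (i, j) ∈ K → ∀ l ∈ L, l ≠ j → l ∈ Γ i) ∧
    (∀ i j, (i, j) ∈ K → pk j = s + ∑ l ∈ L.erase j, pk l) :=
  idnc_clique_instantly_decodable_general Γ K hKclique L hL V pk s hs
end

section
/- A clique in a client's local graph yields a transmittable instantly decodable packet: let Γ_i, Ω_i ⊆ {1,…,n} with Γ_i ∩ Ω_i = ∅ for each client i, fix a client u, and let G_u be the graph whose vertices are the pairs (i,j) with j ∈ Ω_i, with distinct vertices (i,j) and (k,l) adjacent iff i ≠ k and either (j = l and j ∈ Γ_u) or (j ∈ Γ_k, l ∈ Γ_i, j ∈ Γ_u and l ∈ Γ_u). Let K be a clique of G_u with |K| ≥ 2 and let L = {j : (i,j) ∈ K for some i}. Then (a) L ⊆ Γ_u, so client u can form the XOR s = ∑_{l ∈ L} p_l of packets it holds, and (b) for every (i,j) ∈ K one has L \ {j} ⊆ Γ_i, so if the packets lie in a vector space over F_2, each client i with (i,j) ∈ K recovers p_j = s + ∑_{l ∈ L \ {j}} p_l from packets it holds. -/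
/-!
In a clique of `G_u` any two vertices `(i,j) ≠ (k,l)` are adjacent, and both alternatives of
adjacency put `j` in `Γ u`; since `|K| ≥ 2` every vertex has a neighbour, so `L ⊆ Γ u`. If
moreover `l ≠ j`, only the second alternative can hold, and it puts `l` in `Γ i`. Decoding is
then the characteristic-two identity `x + x = 0`.
-/

/-- Adjacency in the local IDNC graph of client `u`: vertices are pairs `(i,j)`
(client `i` wants packet `j`), and `(i,j)`, `(k,l)` are adjacent iff `i ≠ k` and
either (`j = l` and `j ∈ Γ u`) or (`j ∈ Γ k`, `l ∈ Γ i`, `j ∈ Γ u` and `l ∈ Γ u`). -/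
def localIdncAdj {n : ℕ} (Γ : Fin n → Finset (Fin n)) (u : Fin n)
    (v w : Fin n × Fin n) : Prop :=
  v.1 ≠ w.1 ∧
    ((v.2 = w.2 ∧ v.2 ∈ Γ u) ∨
      (v.2 ∈ Γ w.1 ∧ w.2 ∈ Γ v.1 ∧ v.2 ∈ Γ u ∧ w.2 ∈ Γ u))

section Decoding

variable {V : Type*} [AddCommGroup V] [Module (ZMod 2) V]

theorem add_self_eq_zero_of_zmod_two (x : V) : x + x = 0 := by
  rw [← two_smul (ZMod 2), show (2 : ZMod 2) = 0 from rfl, zero_smul]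

theorem eq_sum_add_sum_erase_of_zmod_two {ι : Type*} [DecidableEq ι] {L : Finset ι}
    (p : ι → V) {j : ι} (hj : j ∈ L) :
    p j = ∑ l ∈ L, p l + ∑ l ∈ L.erase j, p l := by
  rw [← Finset.add_sum_erase L p hj, add_assoc, add_self_eq_zero_of_zmod_two, add_zero]

end Decoding

namespace localIdncAdj

variable {n : ℕ} {Γ : Fin n → Finset (Fin n)} {u : Fin n} {v w : Fin n × Fin n}

theorem snd_mem_left (h : localIdncAdj Γ u v w) : v.2 ∈ Γ u := by
  rcases h.2 with ⟨_, hv⟩ | ⟨_, _, hv, _⟩ <;> exact hv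

theorem snd_mem_fst_of_snd_ne (h : localIdncAdj Γ u v w) (hne : w.2 ≠ v.2) : w.2 ∈ Γ v.1 := by
  rcases h.2 with ⟨heq, _⟩ | ⟨_, hw, _⟩
  · exact absurd heq.symm hne
  · exact hw

end localIdncAdj

section Clique

variable {n : ℕ} {Γ : Fin n → Finset (Fin n)} {u : Fin n} {K : Finset (Fin n × Fin n)}

theorem image_snd_subset_of_pairwise_localIdncAdj
    (hK : (K : Set (Fin n × Fin n)).Pairwise (localIdncAdj Γ u)) (hcard : 1 < K.card) :
    K.image Prod.snd ⊆ Γ u := by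
  intro j hj
  obtain ⟨v, hv, rfl⟩ := Finset.mem_image.mp hj
  obtain ⟨w, hw, hwv⟩ := (Finset.one_lt_card_iff_nontrivial.mp hcard).exists_ne v
  exact (hK hv hw hwv.symm).snd_mem_left

theorem mem_of_mem_image_snd_of_pairwise_localIdncAdj
    (hK : (K : Set (Fin n × Fin n)).Pairwise (localIdncAdj Γ u)) {i j l : Fin n}
    (hij : (i, j) ∈ K) (hl : l ∈ K.image Prod.snd) (hlj : l ≠ j) : l ∈ Γ i := by
  obtain ⟨w, hw, rfl⟩ := Finset.mem_image.mp hl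
  have hne : (i, j) ≠ w := by
    rintro rfl
    exact hlj rfl
  exact (hK hij hw hne).snd_mem_fst_of_snd_ne hlj

end Clique

theorem local_idnc_clique_transmittable_general
    {n : ℕ} (Γ : Fin n → Finset (Fin n))
    (u : Fin n)
    (K : Finset (Fin n × Fin n))
    (hKclique : ∀ v ∈ K, ∀ w ∈ K, v ≠ w → localIdncAdj Γ u v w)
    (hKcard : 2 ≤ K.card)
    (L : Finset (Fin n)) (hL : L = K.image Prod.snd)
    (V : Type*) [AddCommGroup V] [Module (ZMod 2) V]
    (pk : Fin n → V) (s : V) (hs : s = ∑ l ∈ L, pk l) :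
    (L ⊆ Γ u) ∧
    (∀ i j, (i, j) ∈ K → ∀ l ∈ L, l ≠ j → l ∈ Γ i) ∧
    (∀ i j, (i, j) ∈ K → pk j = s + ∑ l ∈ L.erase j, pk l) := by
  subst hL hs
  refine ⟨image_snd_subset_of_pairwise_localIdncAdj hKclique hKcard,
    fun i j hij l hl hlj => mem_of_mem_image_snd_of_pairwise_localIdncAdj hKclique hij hl hlj,
    fun i j hij => ?_⟩
  exact eq_sum_add_sum_erase_of_zmod_two pk (Finset.mem_image_of_mem Prod.snd hij)

/-- A clique in client `u`'s local graph yields a transmittable instantly decodable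
packet: if `K` is a clique of `G_u` with `|K| ≥ 2` and `L = {j : (i,j) ∈ K}`, then
(a) `L ⊆ Γ u`, so `u` can form the XOR `s = ∑_{l ∈ L} p_l` of packets it holds, and
(b) for every `(i,j) ∈ K`, `L \ {j} ⊆ Γ i`, so in a vector space over `F₂` client
`i` recovers `p_j = s + ∑_{l ∈ L \ {j}} p_l` from packets it holds. -/
theorem local_idnc_clique_transmittable
    {n : ℕ} (Γ Ω : Fin n → Finset (Fin n))
    (hdisj : ∀ i, Disjoint (Γ i) (Ω i))
    (u : Fin n)
    (K : Finset (Fin n × Fin n))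
    (hKvert : ∀ v ∈ K, v.2 ∈ Ω v.1)
    (hKclique : ∀ v ∈ K, ∀ w ∈ K, v ≠ w → localIdncAdj Γ u v w)
    (hKcard : 2 ≤ K.card)
    (L : Finset (Fin n)) (hL : L = K.image Prod.snd)
    (V : Type*) [AddCommGroup V] [Module (ZMod 2) V]
    (pk : Fin n → V) (s : V) (hs : s = ∑ l ∈ L, pk l) :
    (L ⊆ Γ u) ∧
    (∀ i j, (i, j) ∈ K → ∀ l ∈ L, l ≠ j → l ∈ Γ i) ∧
    (∀ i j, (i, j) ∈ K → pk j = s + ∑ l ∈ L.erase j, pk l) :=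
  local_idnc_clique_transmittable_general Γ u K hKclique hKcard L hL V pk s hs
end
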